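/- For all integers k ≥ 0, the double sum over all integers p and q of binomial(2k, k+p) · binomial(2k, k+q) · |p² - q²| equals 2k² · binomial(2k, k)². -/

import Mathlib

/-!
Write `a p = C(2k, k+p)` and `c p = C(2k-1, k+p)`. Since
`|p² - q²| = p² + q² + 2|p||q| - 2 min(|p|,|q|) (|p| + |q|)` and `min(|p|,|q|)` counts the
`j ∈ [1, k]` below both `|p|` and `|q|`, the double sum equals `2 A M + 2 T² - 4 ∑ⱼ Uⱼ Vⱼ`, where
`A = ∑ a`, `M = ∑ p² a`, `T = ∑ |p| a`, and `Uⱼ = ∑_{|p| ≥ j} |p| a`, `Vⱼ = ∑_{|p| ≥ j} a`.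
Pascal's rule `a p = c (p-1) + c p` and absorption `p a p = k (c (p-1) - c p)` make all of these
telescope in the tails `Hⱼ = ∑_{p ≥ j} c p`: `A = 4 H₀`, `M = 2k H₀`, `T = 2k c 0`, and
`Uⱼ Vⱼ = 4k (H_{j-1}² - Hⱼ²)`. So `2 A M = 4 ∑ⱼ Uⱼ Vⱼ`, and the sum is `2 T² = 2 k² C(2k, k)²`.
-/

/-- Binomial coefficient with integer lower index, zero when the index is negative. -/
def ichoose (n : ℕ) (m : ℤ) : ℤ := if 0 ≤ m then n.choose m.toNat else 0

open Finset

lemma ichoose_of_neg (n : ℕ) {m : ℤ} (hm : m < 0) : ichoose n m = 0 :=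
  if_neg hm.not_ge

@[simp, norm_cast] lemma ichoose_natCast (n m : ℕ) : ichoose n m = n.choose m := by
  simp [ichoose]

lemma ichoose_of_lt {n : ℕ} {m : ℤ} (h : n < m) : ichoose n m = 0 := by
  lift m to ℕ using by omega
  simp [Nat.choose_eq_zero_of_lt (by omega : n < m)]

lemma ichoose_symm (n : ℕ) (m : ℤ) : ichoose n (n - m) = ichoose n m := by
  rcases lt_or_ge m 0 with hm | hm
  · rw [ichoose_of_lt (by omega), ichoose_of_neg n hm]
  rcases lt_or_ge (n : ℤ) m with hn | hn
  · rw [ichoose_of_neg n (by omega), ichoose_of_lt hn]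
  lift m to ℕ using hm
  rw [← Nat.cast_sub (by omega), ichoose_natCast, ichoose_natCast, Nat.choose_symm (by omega)]

lemma ichoose_succ_succ (n : ℕ) (m : ℤ) :
    ichoose (n + 1) (m + 1) = ichoose n m + ichoose n (m + 1) := by
  rcases lt_or_ge m (-1) with hm | hm
  · simp [ichoose_of_neg _ (by omega : m < 0), ichoose_of_neg _ (by omega : m + 1 < 0)]
  obtain rfl | hm := hm.eq_or_lt
  · simp [ichoose]
  lift m to ℕ using by omega
  exact_mod_cast Nat.choose_succ_succ' n m

lemma succ_mul_ichoose_succ (n : ℕ) (m : ℤ) :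
    (m + 1) * ichoose (n + 1) (m + 1) = (n + 1) * ichoose n m := by
  rcases lt_or_ge m 0 with hm | hm
  · rcases lt_or_ge (m + 1) 0 with hm' | hm'
    · simp [ichoose_of_neg _ hm, ichoose_of_neg _ hm']
    · simp [ichoose_of_neg _ hm, show m + 1 = 0 by omega]
  lift m to ℕ using hm
  exact_mod_cast (mul_comm _ _).trans (Nat.add_one_mul_choose_eq n m).symm

lemma Int.sum_Icc_sub' {M : Type*} [AddCommGroup M] (f : ℤ → M) {a b : ℤ} (h : a - 1 ≤ b) :
    ∑ p ∈ Icc a b, (f (p - 1) - f p) = f (a - 1) - f b := by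
  induction b, h using Int.leInduction with
  | base => simp
  | succ b hb ih =>
    rw [← insert_Icc_right_eq_Icc_add_one (by omega), sum_insert (by simp), ih,
      add_sub_cancel_right]
    abel

lemma sum_Icc_eq_add_sum_Icc_add_one {M : Type*} [AddCommMonoid M] (f : ℤ → M) {a b : ℤ}
    (h : a ≤ b) : ∑ p ∈ Icc a b, f p = f a + ∑ p ∈ Icc (a + 1) b, f p := by
  rw [← insert_Icc_add_one_left_eq_Icc h, sum_insert (by simp)]

lemma sum_Icc_neg_eq_of_even {M : Type*} [AddCommMonoid M] {g : ℤ → M} (hg : g.Even) (n : ℕ) :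
    ∑ p ∈ Icc (-n : ℤ) n, g p = g 0 + 2 • ∑ p ∈ Icc (1 : ℤ) n, g p := by
  induction n with
  | zero => simp
  | succ n ih =>
    push_cast
    rw [Icc_succ_succ, sum_union (by simp), sum_pair (by omega), ih, hg,
      ← insert_Icc_right_eq_Icc_add_one (by omega), sum_insert (by simp)]
    simp only [smul_add, two_nsmul]
    abel

lemma sum_filter_le_abs_eq_of_even {M : Type*} [AddCommMonoid M] {g : ℤ → M} (hg : g.Even)
    (n : ℕ) {j : ℤ} (hj : 1 ≤ j) :
    ∑ p ∈ Icc (-n : ℤ) n with j ≤ |p|, g p = 2 • ∑ p ∈ Icc j n, g p := by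
  have hg' : (fun p => if j ≤ |p| then g p else 0).Even := fun p => by simp [hg p]
  rw [sum_filter, sum_Icc_neg_eq_of_even hg', if_neg (by simp; omega), zero_add, ← sum_filter]
  congr 2
  ext p
  simp only [mem_filter, mem_Icc]
  rcases abs_cases p with ⟨hp, _⟩ | ⟨hp, _⟩ <;> rw [hp] <;> omega

lemma sum_Icc_one_ite_le {R : Type*} [Ring R] {n m : ℤ} (h0 : 0 ≤ m) (hm : m ≤ n) (x : R) :
    ∑ j ∈ Icc 1 n, (if j ≤ m then x else 0) = m * x := by
  rw [← sum_filter, show {j ∈ Icc 1 n | j ≤ m} = Icc 1 m by ext; simp; omega, sum_const,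
    nsmul_eq_mul, ← Int.cast_natCast, Int.card_Icc_of_le _ _ (by omega), add_sub_cancel_right]

lemma abs_sq_sub_sq_eq {R : Type*} [CommRing R] [LinearOrder R] [IsStrictOrderedRing R] (x y : R) :
    |x ^ 2 - y ^ 2| = x ^ 2 + y ^ 2 + 2 * |x| * |y| - 2 * min |x| |y| * (|x| + |y|) := by
  rw [← sq_abs x, ← sq_abs y]
  rcases le_total |x| |y| with h | h
  · rw [min_eq_left h, abs_of_nonpos (by nlinarith [abs_nonneg x])]
    ring
  · rw [min_eq_right h, abs_of_nonneg (by nlinarith [abs_nonneg y])]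
    ring

lemma sum_sum_min_abs_mul_eq (a : ℤ → ℤ) {I : Finset ℤ} {n : ℤ} (hI : ∀ p ∈ I, |p| ≤ n) :
    ∑ p ∈ I, ∑ q ∈ I, min |p| |q| * (|p| + |q|) * (a p * a q) =
      2 * ∑ j ∈ Icc 1 n, (∑ p ∈ I with j ≤ |p|, |p| * a p) * ∑ p ∈ I with j ≤ |p|, a p := by
  have hmin : ∀ p ∈ I, ∀ q ∈ I, min |p| |q| * (|p| + |q|) * (a p * a q) =
      ∑ j ∈ Icc 1 n, if j ≤ |p| ∧ j ≤ |q| then (|p| + |q|) * (a p * a q) else 0 := by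
    intro p hp q _
    simp_rw [← le_min_iff]
    rw [sum_Icc_one_ite_le (le_min (abs_nonneg p) (abs_nonneg q))
      ((min_le_left _ _).trans (hI p hp)), Int.cast_id, mul_assoc]
  rw [sum_congr rfl fun p hp => sum_congr rfl fun q hq => hmin p hp q hq]
  simp_rw [sum_comm (s := I) (t := Icc 1 n)]
  rw [mul_sum]
  refine sum_congr rfl fun j _ => ?_
  rw [two_mul]
  nth_rewrite 2 [mul_comm]
  simp only [sum_filter, sum_mul_sum, ← sum_add_distrib]
  refine sum_congr rfl fun p _ => sum_congr rfl fun q _ => ?_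
  by_cases hp : j ≤ |p| <;> by_cases hq : j ≤ |q| <;> simp [hp, hq]
  ring

lemma sum_sum_mul_abs_sq_sub_sq_eq (a : ℤ → ℤ) {I : Finset ℤ} {n : ℤ} (hI : ∀ p ∈ I, |p| ≤ n) :
    ∑ p ∈ I, ∑ q ∈ I, a p * a q * |p ^ 2 - q ^ 2| =
      2 * (∑ p ∈ I, a p) * (∑ p ∈ I, p ^ 2 * a p) + 2 * (∑ p ∈ I, |p| * a p) ^ 2 -
        4 * ∑ j ∈ Icc 1 n, (∑ p ∈ I with j ≤ |p|, |p| * a p) * ∑ p ∈ I with j ≤ |p|, a p := by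
  calc ∑ p ∈ I, ∑ q ∈ I, a p * a q * |p ^ 2 - q ^ 2|
      = ∑ p ∈ I, ∑ q ∈ I, (a p * (q ^ 2 * a q) + p ^ 2 * a p * a q + 2 * (|p| * a p * (|q| * a q))
          - 2 * (min |p| |q| * (|p| + |q|) * (a p * a q))) := by
        refine sum_congr rfl fun p _ => sum_congr rfl fun q _ => ?_
        rw [abs_sq_sub_sq_eq]
        ring
    _ = _ := by
        simp only [sum_sub_distrib, sum_add_distrib, ← mul_sum, ← sum_mul,
          sum_sum_min_abs_mul_eq a hI]
        ring

section Telescoping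

variable {k : ℕ} {a c : ℤ → ℤ}

lemma sum_Icc_id_mul (absorb : ∀ p, p * a p = k * (c (p - 1) - c p)) (top : c k = 0) {j : ℤ}
    (hj : j - 1 ≤ k) : ∑ p ∈ Icc j (k : ℤ), p * a p = k * c (j - 1) := by
  simp_rw [absorb, ← mul_sum, Int.sum_Icc_sub' c hj, top, sub_zero]

lemma sum_Icc_eq_tail_add_tail (pascal : ∀ p, a p = c (p - 1) + c p) (top : c k = 0) {j : ℤ}
    (hj : j - 1 ≤ k) :
    ∑ p ∈ Icc j (k : ℤ), a p = ∑ p ∈ Icc (j - 1) (k : ℤ), c p + ∑ p ∈ Icc j (k : ℤ), c p := by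
  calc ∑ p ∈ Icc j (k : ℤ), a p = ∑ p ∈ Icc j (k : ℤ), ((c (p - 1) - c p) + 2 * c p) :=
        sum_congr rfl fun p _ => by rw [pascal]; ring
    _ = _ := by
        rw [sum_add_distrib, Int.sum_Icc_sub' c hj, top, ← mul_sum,
          sum_Icc_eq_add_sum_Icc_add_one c hj, sub_add_cancel]
        ring

lemma sum_Icc_one_sq_mul (absorb : ∀ p, p * a p = k * (c (p - 1) - c p)) (top : c k = 0) :
    ∑ p ∈ Icc 1 (k : ℤ), p ^ 2 * a p = k * ∑ p ∈ Icc 0 (k : ℤ), c p := by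
  have hk : (1 : ℤ) - 1 ≤ k := by simp
  calc ∑ p ∈ Icc 1 (k : ℤ), p ^ 2 * a p
      = k * ∑ p ∈ Icc 1 (k : ℤ),
          (((p - 1) * c (p - 1) - p * c p) + (c (p - 1) - c p) + c p) := by
        rw [mul_sum]
        refine sum_congr rfl fun p _ => ?_
        rw [sq, mul_assoc, absorb]
        ring
    _ = k * ∑ p ∈ Icc 0 (k : ℤ), c p := by
        have h0 : ∑ p ∈ Icc 0 (k : ℤ), c p = c 0 + ∑ p ∈ Icc 1 (k : ℤ), c p :=
          sum_Icc_eq_add_sum_Icc_add_one c (by simp)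
        rw [sum_add_distrib, sum_add_distrib, Int.sum_Icc_sub' (fun p => p * c p) hk,
          Int.sum_Icc_sub' c hk, top, h0, sub_self]
        ring

lemma sum_Icc_one_mul_tail_add_tail (top : c k = 0) :
    ∑ j ∈ Icc 1 (k : ℤ), c (j - 1) * (∑ p ∈ Icc (j - 1) (k : ℤ), c p + ∑ p ∈ Icc j (k : ℤ), c p) =
      (∑ p ∈ Icc 0 (k : ℤ), c p) ^ 2 := by
  let H : ℤ → ℤ := fun j => (∑ p ∈ Icc j (k : ℤ), c p) ^ 2
  calc _ = ∑ j ∈ Icc 1 (k : ℤ), (H (j - 1) - H j) :=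
        sum_congr rfl fun j hj => by
          dsimp only [H]
          rw [sum_Icc_eq_add_sum_Icc_add_one c (by simp at hj; omega), sub_add_cancel]
          ring
    _ = _ := by
        rw [Int.sum_Icc_sub' H (by simp)]
        simp [H, top]

lemma even_of_pascal (pascal : ∀ p, a p = c (p - 1) + c p) (symm : ∀ p, c (-p) = c (p - 1)) :
    a.Even := fun p => by
  rw [pascal, pascal, show -p - 1 = -(p + 1) by ring, symm, symm, add_sub_cancel_right, add_comm]

lemma sum_filter_le_abs_abs_mul (even : a.Even) (absorb : ∀ p, p * a p = k * (c (p - 1) - c p))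
    (top : c k = 0) {j : ℤ} (hj : 1 ≤ j) (hjk : j - 1 ≤ k) :
    ∑ p ∈ Icc (-k : ℤ) k with j ≤ |p|, |p| * a p = 2 * (k * c (j - 1)) := by
  rw [sum_filter_le_abs_eq_of_even (fun p => by rw [abs_neg, even]) k hj, two_nsmul, ← two_mul,
    ← sum_Icc_id_mul absorb top hjk]
  congr 1
  exact sum_congr rfl fun p hp => by rw [abs_of_pos (by simp at hp; omega)]

lemma sum_filter_le_abs (even : a.Even) (pascal : ∀ p, a p = c (p - 1) + c p) (top : c k = 0)
    {j : ℤ} (hj : 1 ≤ j) (hjk : j - 1 ≤ k) :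
    ∑ p ∈ Icc (-k : ℤ) k with j ≤ |p|, a p =
      2 * (∑ p ∈ Icc (j - 1) (k : ℤ), c p + ∑ p ∈ Icc j (k : ℤ), c p) := by
  rw [sum_filter_le_abs_eq_of_even even k hj, two_nsmul, ← two_mul,
    sum_Icc_eq_tail_add_tail pascal top hjk]

end Telescoping

theorem sum_sum_mul_abs_sq_sub_sq_of_pascal {k : ℕ} {a c : ℤ → ℤ}
    (pascal : ∀ p, a p = c (p - 1) + c p) (absorb : ∀ p, p * a p = k * (c (p - 1) - c p))
    (top : c k = 0) (symm : ∀ p, c (-p) = c (p - 1)) :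
    ∑ p ∈ Icc (-k : ℤ) k, ∑ q ∈ Icc (-k : ℤ) k, a p * a q * |p ^ 2 - q ^ 2| =
      2 * k ^ 2 * a 0 ^ 2 := by
  have even := even_of_pascal pascal symm
  have hc0 : a 0 = 2 * c 0 := by
    rw [pascal, ← symm, neg_zero]
    ring
  have hT : ∑ p ∈ Icc (-k : ℤ) k, |p| * a p = 2 * (k * c 0) := by
    rw [← sum_filter_of_ne fun p _ hp => Int.one_le_abs (abs_ne_zero.1 (left_ne_zero_of_mul hp)),
      sum_filter_le_abs_abs_mul even absorb top le_rfl (by simp), sub_self]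
  have hA : ∑ p ∈ Icc (-k : ℤ) k, a p = 4 * ∑ p ∈ Icc 0 (k : ℤ), c p := by
    rw [sum_Icc_neg_eq_of_even even, sum_Icc_eq_tail_add_tail pascal top (by simp), sub_self,
      sum_Icc_eq_add_sum_Icc_add_one c (by simp : (0 : ℤ) ≤ k), hc0, zero_add]
    ring
  have hM : ∑ p ∈ Icc (-k : ℤ) k, p ^ 2 * a p = 2 * (k * ∑ p ∈ Icc 0 (k : ℤ), c p) := by
    rw [sum_Icc_neg_eq_of_even (fun p => by rw [neg_sq, even]), sum_Icc_one_sq_mul absorb top]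
    simp
  have hW : ∑ j ∈ Icc 1 (k : ℤ), (∑ p ∈ Icc (-k : ℤ) k with j ≤ |p|, |p| * a p) *
      ∑ p ∈ Icc (-k : ℤ) k with j ≤ |p|, a p = 4 * k * (∑ p ∈ Icc 0 (k : ℤ), c p) ^ 2 := by
    rw [← sum_Icc_one_mul_tail_add_tail top, mul_sum]
    refine sum_congr rfl fun j hj => ?_
    rw [mem_Icc] at hj
    rw [sum_filter_le_abs_abs_mul even absorb top hj.1 (by omega),
      sum_filter_le_abs even pascal top hj.1 (by omega)]
    ring
  rw [sum_sum_mul_abs_sq_sub_sq_eq a fun p hp => abs_le.2 (mem_Icc.1 hp), hA, hM, hT, hW, hc0]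
  ring

theorem stmt1 (k : ℕ) :
    ∑ p ∈ Finset.Icc (-(k : ℤ)) k, ∑ q ∈ Finset.Icc (-(k : ℤ)) k,
      ichoose (2 * k) (k + p) * ichoose (2 * k) (k + q) * |p ^ 2 - q ^ 2|
      = 2 * k ^ 2 * ((2 * k).choose k : ℤ) ^ 2 := by
  obtain rfl | hk := eq_or_ne k 0
  · simp
  obtain ⟨n, hn⟩ : ∃ n, 2 * k = n + 1 := ⟨2 * k - 1, by omega⟩
  have pascal (p : ℤ) : ichoose (2 * k) (k + p) = ichoose n (k + (p - 1)) + ichoose n (k + p) := by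
    have h := ichoose_succ_succ n (k + (p - 1))
    rwa [show (k : ℤ) + (p - 1) + 1 = k + p by ring, ← hn] at h
  have absorb (p : ℤ) :
      p * ichoose (2 * k) (k + p) = k * (ichoose n (k + (p - 1)) - ichoose n (k + p)) := by
    have h := succ_mul_ichoose_succ n (k + (p - 1))
    rw [show (n : ℤ) + 1 = 2 * k by exact_mod_cast hn.symm,
      show (k : ℤ) + (p - 1) + 1 = k + p by ring, ← hn] at h
    linear_combination h - k * pascal p
  have top : ichoose n (k + k) = 0 := ichoose_of_lt (by omega)
  have symm (p : ℤ) : ichoose n (k + -p) = ichoose n (k + (p - 1)) := by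
    rw [← ichoose_symm n (k + (p - 1))]
    congr 1
    omega
  simpa using sum_sum_mul_abs_sq_sub_sq_of_pascal (a := fun p => ichoose (2 * k) (k + p))
    (c := fun p => ichoose n (k + p)) pascal absorb top symm
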